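/- arXiv:0907.4872 — 3 statements merged into one kernel-verified Lean document; each statement's English description precedes it below -/
import Mathlib

section
/- Every element P of ℤ[x]/Aℤ[x] has one and only one (A,N)-representation: there is a unique sequence (b_n)_{n∈ℕ} with b_n ∈ N = {0,...,a_0 - 1} such that P - Σ_{n=0}^{m-1} b_n X^n ∈ X^m·(ℤ[x]/Aℤ[x]) for all m ∈ ℕ. -/
/-! Let `a₀ = A(0)`. Evaluating at `0` identifies `Q/XQ` with `ℤ/a₀ℤ`, so the digits
`0, …, a₀ - 1` form a complete system of residues of `Q` modulo `X`; and `X` is a non-zero-divisor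
of `Q` because `X ∤ A`. In any commutative ring these two facts suffice: splitting off the digit of
`P` and dividing the rest by `X` (the backward division map `D_A`) yields the expansion, and two
expansions of `P` share their first digit and, after cancelling `X`, are expansions of the same
element, which gives uniqueness digit by digit. -/

open Polynomial

section DigitExpansion

variable {R : Type*} [CommRing R] {x P : R} {D : Set ℤ} {b b' : ℕ → ℤ}

def IsDigitExpansion (x P : R) (b : ℕ → ℤ) : Prop :=
  ∀ m : ℕ, x ^ m ∣ P - ∑ n ∈ Finset.range m, b n • x ^ n

lemma IsDigitExpansion.dvd_sub_head (h : IsDigitExpansion x P b) : x ∣ P - b 0 := by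
  simpa using h 1

lemma IsDigitExpansion.tail (hx : IsLeftRegular x) (h : IsDigitExpansion x P b) {Q : R}
    (hQ : P - b 0 = x * Q) : IsDigitExpansion x Q (fun n => b (n + 1)) := by
  intro m
  have hsplit : P - ∑ n ∈ Finset.range (m + 1), b n • x ^ n
      = x * (Q - ∑ n ∈ Finset.range m, b (n + 1) • x ^ n) := by
    rw [Finset.sum_range_succ', mul_sub, Finset.mul_sum]
    simp only [zsmul_eq_mul, pow_succ', pow_zero, mul_one, mul_left_comm _ x]
    linear_combination hQ
  rw [← hx.dvd_cancel_left, ← pow_succ', ← hsplit]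
  exact h (m + 1)

theorem exists_isDigitExpansion (hE : ∀ P : R, ∃ d ∈ D, x ∣ P - d) (P : R) :
    ∃ b : ℕ → ℤ, (∀ n, b n ∈ D) ∧ IsDigitExpansion x P b := by
  choose digit hdigit tail htail using hE
  refine ⟨fun n => digit (tail^[n] P), fun n => hdigit _, fun m => ⟨tail^[m] P, ?_⟩⟩
  induction m with
  | zero => simp
  | succ m ih =>
    rw [Finset.sum_range_succ, Function.iterate_succ_apply', zsmul_eq_mul]
    linear_combination ih + x ^ m * htail (tail^[m] P)

lemma IsDigitExpansion.head_eq_and_tail (hx : IsLeftRegular x)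
    (hU : ∀ d ∈ D, ∀ d' ∈ D, x ∣ (d - d' : R) → d = d')
    (hbD : ∀ n, b n ∈ D) (hbD' : ∀ n, b' n ∈ D)
    (hb : IsDigitExpansion x P b) (hb' : IsDigitExpansion x P b') :
    b 0 = b' 0 ∧ ∃ Q, IsDigitExpansion x Q (fun n => b (n + 1)) ∧
      IsDigitExpansion x Q (fun n => b' (n + 1)) := by
  obtain ⟨Q, hQ⟩ := hb.dvd_sub_head
  obtain ⟨Q', hQ'⟩ := hb'.dvd_sub_head
  have head : b 0 = b' 0 := hU _ (hbD 0) _ (hbD' 0) ⟨Q' - Q, by linear_combination hQ' - hQ⟩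
  have hQQ' : Q = Q' := hx (show x * Q = x * Q' by rw [← hQ, ← hQ', head])
  subst hQQ'
  exact ⟨head, Q, hb.tail hx hQ, hb'.tail hx hQ'⟩

theorem IsDigitExpansion.unique (hx : IsLeftRegular x)
    (hU : ∀ d ∈ D, ∀ d' ∈ D, x ∣ (d - d' : R) → d = d')
    (hbD : ∀ n, b n ∈ D) (hbD' : ∀ n, b' n ∈ D)
    (hb : IsDigitExpansion x P b) (hb' : IsDigitExpansion x P b') : b = b' := by
  funext n
  induction n generalizing P b b' with
  | zero => exact (hb.head_eq_and_tail hx hU hbD hbD' hb').1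
  | succ n ih =>
    obtain ⟨-, Q, hQ, hQ'⟩ := hb.head_eq_and_tail hx hU hbD hbD' hb'
    exact ih (fun n => hbD (n + 1)) (fun n => hbD' (n + 1)) hQ hQ'

theorem existsUnique_isDigitExpansion (hx : IsLeftRegular x)
    (hE : ∀ P : R, ∃ d ∈ D, x ∣ P - d)
    (hU : ∀ d ∈ D, ∀ d' ∈ D, x ∣ (d - d' : R) → d = d') (P : R) :
    ∃! b : ℕ → ℤ, (∀ n, b n ∈ D) ∧ IsDigitExpansion x P b := by
  obtain ⟨b, hbD, hb⟩ := exists_isDigitExpansion hE P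
  exact ⟨b, ⟨hbD, hb⟩, fun b' ⟨hbD', hb'⟩ => hb'.unique hx hU hbD' hbD hb⟩

end DigitExpansion

section QuotientByPolynomial

variable {A : ℤ[X]}

lemma isLeftRegular_mk_X (hA : A.coeff 0 ≠ 0) :
    IsLeftRegular (Ideal.Quotient.mk (Ideal.span {A}) X) := by
  rw [isLeftRegular_iff_right_eq_zero_of_mul]
  intro Q hQ
  obtain ⟨q, rfl⟩ := Ideal.Quotient.mk_surjective Q
  rw [← map_mul, Ideal.Quotient.eq_zero_iff_dvd] at hQ
  obtain ⟨s, hs⟩ := hQ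
  have hs0 : s.coeff 0 = 0 := by simpa [hA] using congrArg (coeff · 0) hs
  obtain ⟨t, rfl⟩ := X_dvd_iff.mpr hs0
  rw [Ideal.Quotient.eq_zero_iff_dvd]
  exact ⟨t, mul_left_cancel₀ X_ne_zero (by linear_combination hs)⟩

lemma exists_mem_Ico_mk_X_dvd_sub (ha : 0 < A.coeff 0) (P : ℤ[X] ⧸ Ideal.span {A}) :
    ∃ d ∈ Set.Ico 0 (A.coeff 0), Ideal.Quotient.mk (Ideal.span {A}) X ∣ P - d := by
  obtain ⟨p, rfl⟩ := Ideal.Quotient.mk_surjective P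
  set a := A.coeff 0
  refine ⟨p.coeff 0 % a, ⟨Int.emod_nonneg _ ha.ne', Int.emod_lt_of_pos _ ha⟩, ?_⟩
  have hX : X ∣ p - C (p.coeff 0 % a) - C (p.coeff 0 / a) * A := by
    rw [X_dvd_iff, coeff_sub, coeff_sub, coeff_C_zero, coeff_C_mul]
    linarith [Int.emod_add_mul_ediv (p.coeff 0) a]
  simpa [Ideal.Quotient.mk_singleton_self] using
    _root_.map_dvd (Ideal.Quotient.mk (Ideal.span {A})) hX

lemma eq_of_mk_X_dvd_sub {d d' : ℤ} (hd : d ∈ Set.Ico 0 (A.coeff 0))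
    (hd' : d' ∈ Set.Ico 0 (A.coeff 0))
    (h : Ideal.Quotient.mk (Ideal.span {A}) X ∣ (d - d' : ℤ[X] ⧸ Ideal.span {A})) : d = d' := by
  obtain ⟨Q, hQ⟩ := h
  obtain ⟨q, rfl⟩ := Ideal.Quotient.mk_surjective Q
  obtain ⟨s, hs⟩ : A ∣ C (d - d') - X * q := by
    rw [← Ideal.Quotient.eq_zero_iff_dvd]
    simp [hQ]
  have hdvd : A.coeff 0 ∣ d - d' := ⟨s.coeff 0, by simpa using congrArg (coeff · 0) hs⟩
  have hlt : |d - d'| < A.coeff 0 :=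
    abs_lt.mpr ⟨by linarith [hd.1, hd'.2], by linarith [hd.2, hd'.1]⟩
  linarith [Int.eq_zero_of_abs_lt_dvd hdvd hlt]

end QuotientByPolynomial

theorem AN_representation_exists_unique_general (A : Polynomial ℤ)
    (ha0 : 2 ≤ A.coeff 0)
    (P : Polynomial ℤ ⧸ Ideal.span {A}) :
    ∃! b : ℕ → ℤ, (∀ n, 0 ≤ b n ∧ b n < A.coeff 0) ∧
      ∀ m : ℕ, ∃ Q : Polynomial ℤ ⧸ Ideal.span {A},
        P - ∑ n ∈ Finset.range m,
            b n • (Ideal.Quotient.mk (Ideal.span {A}) Polynomial.X) ^ n =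
          (Ideal.Quotient.mk (Ideal.span {A}) Polynomial.X) ^ m * Q :=
  existsUnique_isDigitExpansion (isLeftRegular_mk_X (by omega))
    (exists_mem_Ico_mk_X_dvd_sub (by omega)) (fun _ hd _ hd' => eq_of_mk_X_dvd_sub hd hd') P

/-- every element of ℤ[x]/Aℤ[x] has a unique (A,N)-representation,
N = {0,…,a_0-1}: a unique digit sequence (b_n) with
P - Σ_{n<m} b_n X^n ∈ X^m·(ℤ[x]/Aℤ[x]) for all m. -/
theorem AN_representation_exists_unique (A : Polynomial ℤ)
    (hd : 0 < A.natDegree) (ha0 : 2 ≤ A.coeff 0)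
    (had : A.coeff A.natDegree ≠ 0)
    (P : Polynomial ℤ ⧸ Ideal.span {A}) :
    ∃! b : ℕ → ℤ, (∀ n, 0 ≤ b n ∧ b n < A.coeff 0) ∧
      ∀ m : ℕ, ∃ Q : Polynomial ℤ ⧸ Ideal.span {A},
        P - ∑ n ∈ Finset.range m,
            b n • (Ideal.Quotient.mk (Ideal.span {A}) Polynomial.X) ^ n =
          (Ideal.Quotient.mk (Ideal.span {A}) Polynomial.X) ^ m * Q :=
  AN_representation_exists_unique_general A ha0 P
end

section
/- Let τ_{-2/3} : ℤ → ℤ be given by τ_{-2/3}(N) = -⌊-2N/3⌋. For any finite set I of consecutive integers, τ_{-2/3}^{-n}(I) is a finite set of consecutive integers for all n, and (#I - 1)(3/2)^n + 1 ≤ #τ_{-2/3}^{-n}(I) ≤ (#I + 1)(3/2)^n - 1. -/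
/-!
Writing `τ(M) = ⌊(2M + 2)/3⌋` shows that `τ` is monotone with a lower adjoint `a ↦ ⌈(3a - 2)/2⌉`
and an upper adjoint `b ↦ ⌊3b/2⌋`, so the preimage of `[a, b]` is again an interval, and iterating
the Galois connections gives the `n`-th preimage. If `[a, b]` has `L` points, its preimage has
`L'` points with `3L - 1 ≤ 2L' ≤ 3L + 1`, i.e. `L - 1` grows at least and `L + 1` at most by the
factor `3/2` at each step.
-/

noncomputable section

/-- The shift radix map for r = -2/3: τ(N) = -⌊-2N/3⌋. -/
def tauTwoThirds (N : ℤ) : ℤ := -⌊(-2 : ℚ) / 3 * (N : ℚ)⌋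

open Finset

theorem GaloisConnection.iterate {α : Type*} [Preorder α] {l u : α → α}
    (gc : GaloisConnection l u) (n : ℕ) : GaloisConnection l^[n] u^[n] := by
  induction n with
  | zero => exact GaloisConnection.id
  | succ n ih =>
    rw [Function.iterate_succ, Function.iterate_succ']
    exact gc.compose ih

lemma tauTwoThirds_eq_ediv (M : ℤ) : tauTwoThirds M = (2 * M + 2) / 3 := by
  have h : (-2 : ℚ) / 3 * M = ((-2 * M : ℤ) : ℚ) / ((3 : ℕ) : ℚ) := by push_cast; ring
  rw [tauTwoThirds, h, Rat.floor_intCast_div_natCast]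
  omega

/-- `⌈(3a - 2)/2⌉`, written with floor division. -/
def tauTwoThirdsLower (a : ℤ) : ℤ := -((2 - 3 * a) / 2)

def tauTwoThirdsUpper (b : ℤ) : ℤ := 3 * b / 2

lemma gc_tauTwoThirdsLower_tauTwoThirds : GaloisConnection tauTwoThirdsLower tauTwoThirds := by
  intro a M
  rw [tauTwoThirdsLower, tauTwoThirds_eq_ediv]
  omega

lemma gc_tauTwoThirds_tauTwoThirdsUpper : GaloisConnection tauTwoThirds tauTwoThirdsUpper := by
  intro M b
  rw [tauTwoThirdsUpper, tauTwoThirds_eq_ediv]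
  omega

lemma iterate_tauTwoThirds_mem_Icc_iff (n : ℕ) (a b M : ℤ) :
    tauTwoThirds^[n] M ∈ Icc a b ↔ M ∈ Icc (tauTwoThirdsLower^[n] a) (tauTwoThirdsUpper^[n] b) := by
  simp only [mem_Icc, (gc_tauTwoThirdsLower_tauTwoThirds.iterate n).le_iff_le,
    (gc_tauTwoThirds_tauTwoThirdsUpper.iterate n).le_iff_le]

lemma tauTwoThirdsLower_le_tauTwoThirdsUpper {a b : ℤ} (hab : a ≤ b) :
    tauTwoThirdsLower a ≤ tauTwoThirdsUpper b := by
  rw [tauTwoThirdsLower, tauTwoThirdsUpper]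
  omega

lemma card_Icc_tauTwoThirds_bounds {a b : ℤ} (hab : a ≤ b) :
    3 * (#(Icc a b) : ℤ) - 1 ≤ 2 * #(Icc (tauTwoThirdsLower a) (tauTwoThirdsUpper b)) ∧
      2 * (#(Icc (tauTwoThirdsLower a) (tauTwoThirdsUpper b)) : ℤ) ≤ 3 * #(Icc a b) + 1 := by
  have hab' := tauTwoThirdsLower_le_tauTwoThirdsUpper hab
  rw [Int.card_Icc_of_le a b (by omega), Int.card_Icc_of_le _ _ (by omega), tauTwoThirdsLower,
    tauTwoThirdsUpper]
  omega

lemma iterate_tauTwoThirdsLower_le_iterate_tauTwoThirdsUpper {a b : ℤ} (hab : a ≤ b) (n : ℕ) :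
    tauTwoThirdsLower^[n] a ≤ tauTwoThirdsUpper^[n] b := by
  induction n with
  | zero => exact hab
  | succ n ih =>
    rw [Function.iterate_succ_apply', Function.iterate_succ_apply']
    exact tauTwoThirdsLower_le_tauTwoThirdsUpper ih

/-- the n-th preimage of a finite set of consecutive integers under
τ_{-2/3} is a finite set of consecutive integers, of cardinality between
(#I-1)(3/2)^n + 1 and (#I+1)(3/2)^n - 1. -/
theorem tauTwoThirds_preimage_interval (a b : ℤ) (hab : a ≤ b) (n : ℕ) :
    ∃ a' b' : ℤ, a' ≤ b' ∧
      (∀ M : ℤ, tauTwoThirds^[n] M ∈ Finset.Icc a b ↔ M ∈ Finset.Icc a' b') ∧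
      (((Finset.Icc a b).card : ℝ) - 1) * (3 / 2) ^ n + 1 ≤ ((Finset.Icc a' b').card : ℝ) ∧
      ((Finset.Icc a' b').card : ℝ) ≤ (((Finset.Icc a b).card : ℝ) + 1) * (3 / 2) ^ n - 1 := by
  have hle := iterate_tauTwoThirdsLower_le_iterate_tauTwoThirdsUpper hab
  set L : ℕ → ℝ := fun k ↦ #(Icc (tauTwoThirdsLower^[k] a) (tauTwoThirdsUpper^[k] b)) with hL
  have hstep (k : ℕ) : 3 * L k - 1 ≤ 2 * L (k + 1) ∧ 2 * L (k + 1) ≤ 3 * L k + 1 := by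
    simp only [hL, Function.iterate_succ_apply']
    exact_mod_cast card_Icc_tauTwoThirds_bounds (hle k)
  have hlower := geom_le (u := fun k ↦ L k - 1) (c := 3 / 2) (by norm_num) n
    fun k _ ↦ by linarith [hstep k]
  have hupper := le_geom (u := fun k ↦ L k + 1) (c := 3 / 2) (by norm_num) n
    fun k _ ↦ by linarith [hstep k]
  refine ⟨_, _, hle n, fun M ↦ iterate_tauTwoThirds_mem_Icc_iff n a b M, ?_, ?_⟩
  · simp only [hL, Function.iterate_zero_apply] at hlower
    linarith
  · simp only [hL, Function.iterate_zero_apply] at hupper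
    linarith
end
end

section
/- If t ∈ ℝ^d is an m-exclusive point of the collection {T_r(x) : x ∈ ℤ^d} (i.e., t belongs to exactly m tiles, where m is the minimal covering degree), then M_r t is also m-exclusive. -/
open Matrix Filter

noncomputable section

/-- Scalar product r·z of a real vector with an integer vector. -/
def srsDot {d : ℕ} (r : Fin d → ℝ) (z : Fin d → ℤ) : ℝ := ∑ i, r i * (z i : ℝ)

/-- The shift radix map τ_r(z) = (z_1,...,z_{d-1}, -⌊r·z⌋). -/
def srsTau {d : ℕ} (r : Fin d → ℝ) (z : Fin d → ℤ) : Fin d → ℤ :=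
  fun i => if h : (i : ℕ) + 1 < d then z ⟨(i : ℕ) + 1, h⟩ else -⌊srsDot r z⌋

/-- The companion matrix M_r of r. -/
def companion {d : ℕ} (r : Fin d → ℝ) : Matrix (Fin d) (Fin d) ℝ :=
  fun i j => if (i : ℕ) + 1 < d then (if (j : ℕ) = (i : ℕ) + 1 then 1 else 0) else -r j

/-- The vector (0,...,0,v)^t. -/
def digitVec {d : ℕ} (v : ℝ) : Fin d → ℝ := fun i => if (i : ℕ) + 1 = d then v else 0

/-- Coordinatewise cast of an integer vector to a real vector. -/
def intToReal {d : ℕ} (z : Fin d → ℤ) : Fin d → ℝ := fun i => (z i : ℝ)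

/-- M_r is contractive (spectral radius < 1). -/
def srsContractive {d : ℕ} (r : Fin d → ℝ) : Prop :=
  ∃ C > (0:ℝ), ∃ ρ : ℝ, 0 ≤ ρ ∧ ρ < 1 ∧
    ∀ (n : ℕ) (x : Fin d → ℝ), ‖((companion r) ^ n).mulVec x‖ ≤ C * ρ ^ n * ‖x‖

/-- The SRS tile T_r(x), as the set of limit points lim M_r^n z_{-n} with
τ_r^n(z_{-n}) = x. -/
def srsTile {d : ℕ} (r : Fin d → ℝ) (x : Fin d → ℤ) : Set (Fin d → ℝ) :=
  {t | ∃ z : ℕ → (Fin d → ℤ), (∀ n, (srsTau r)^[n] (z n) = x) ∧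
    Tendsto (fun n => ((companion r) ^ n).mulVec (intToReal (z n))) atTop (nhds t)}

/-! The tiles containing `M_r t` are exactly the images under `τ_r` of the tiles containing `t`:
`M_r T_r(y) ⊆ T_r(τ_r y)` by the set equation, and conversely a pigeonhole argument over the finite
fibre `τ_r⁻¹(x)`, with contractivity of `M_r` controlling the error, produces a preimage.
Since `τ_r` has finite fibres, this image is no larger than the original set (also when both are
infinite, where `ncard` is `0`), so minimality of `m` forces equality. -/

open Topology

theorem Set.ncard_image_le_of_finite_preimage_singleton {α β : Type*} {f : α → β}
    (hf : ∀ b, (f ⁻¹' {b}).Finite) (s : Set α) : (f '' s).ncard ≤ s.ncard := by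
  rcases s.finite_or_infinite with hs | hs
  · exact Set.ncard_image_le hs
  · have : (f '' s).Infinite := fun hfin =>
      hs ((hfin.preimage' fun b _ => hf b).subset (Set.subset_preimage_image f s))
    rw [this.ncard]
    exact Nat.zero_le _

section

variable {d : ℕ} (r : Fin d → ℝ)

theorem companion_mulVec_apply (x : Fin d → ℝ) (i : Fin d) :
    (companion r *ᵥ x) i =
      if h : (i : ℕ) + 1 < d then x ⟨(i : ℕ) + 1, h⟩ else -∑ j, r j * x j := by
  simp only [mulVec, dotProduct, companion]
  split_ifs with h
  · rw [Finset.sum_eq_single ⟨(i : ℕ) + 1, h⟩] <;> simp +contextual [Fin.ext_iff]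
  · simp

theorem companion_mulVec_intToReal (z : Fin d → ℤ) :
    companion r *ᵥ intToReal z =
      intToReal (srsTau r z) + digitVec (⌊srsDot r z⌋ - srsDot r z) := by
  funext i
  rw [Pi.add_apply, companion_mulVec_apply]
  by_cases h : (i : ℕ) + 1 < d
  · simp [h, intToReal, srsTau, digitVec, Nat.ne_of_lt h]
  · have hi : (i : ℕ) + 1 = d := le_antisymm i.isLt (not_lt.mp h)
    simp only [dif_neg h, intToReal, srsTau, digitVec, if_pos hi, srsDot]
    push_cast
    ring

theorem norm_companion_mulVec_intToReal_sub_le (z : Fin d → ℤ) :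
    ‖companion r *ᵥ intToReal z - intToReal (srsTau r z)‖ ≤ 1 := by
  rw [companion_mulVec_intToReal, add_sub_cancel_left, pi_norm_le_iff_of_nonneg zero_le_one]
  intro i
  simp only [digitVec]
  split_ifs
  · rw [Real.norm_eq_abs, abs_le]
    constructor
    · linarith [Int.sub_one_lt_floor (srsDot r z)]
    · linarith [Int.floor_le (srsDot r z)]
  · simp

end

theorem isClosedEmbedding_intToReal {d : ℕ} :
    IsClosedEmbedding (intToReal : (Fin d → ℤ) → Fin d → ℝ) :=
  IsClosedEmbedding.piMap fun _ => Int.isClosedEmbedding_coe_real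

section

variable {d : ℕ} (hd : 0 < d) {r : Fin d → ℝ}

theorem companion_mulVec_injective (hr0 : r ⟨0, hd⟩ ≠ 0) :
    Function.Injective (companion r).mulVec := by
  rw [← Matrix.coe_mulVecLin, ← LinearMap.ker_eq_bot, LinearMap.ker_eq_bot']
  intro v hv
  have hv' (i : Fin d) : (companion r *ᵥ v) i = 0 := congrFun hv i
  have hpos (i : Fin d) (hi : (i : ℕ) ≠ 0) : v i = 0 := by
    simpa [companion_mulVec_apply, show (i : ℕ) - 1 + 1 = i by omega,
      show (i : ℕ) - 1 + 1 < d by omega] using hv' ⟨i - 1, by omega⟩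
  have hsum : ∑ j, r j * v j = r ⟨0, hd⟩ * v ⟨0, hd⟩ :=
    Finset.sum_eq_single _
      (fun j _ hj => by rw [hpos j (by simpa [Fin.ext_iff] using hj), mul_zero]) (by simp)
  have hzero : v ⟨0, hd⟩ = 0 := by
    have := hv' ⟨d - 1, by omega⟩
    rw [companion_mulVec_apply, dif_neg (show ¬(d - 1 + 1 < d) by omega), hsum, neg_eq_zero] at this
    exact (mul_eq_zero.mp this).resolve_left hr0
  funext i
  by_cases hi : (i : ℕ) = 0
  · rw [show i = ⟨0, hd⟩ from Fin.ext hi, hzero]; rfl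
  · exact hpos i hi

theorem isClosedEmbedding_companion_mulVec (hr0 : r ⟨0, hd⟩ ≠ 0) :
    IsClosedEmbedding (companion r).mulVec :=
  LinearMap.isClosedEmbedding_of_injective (f := (companion r).mulVecLin)
    (LinearMap.ker_eq_bot.mpr (companion_mulVec_injective hd hr0))

theorem finite_srsTau_preimage_singleton (hr0 : r ⟨0, hd⟩ ≠ 0) (x : Fin d → ℤ) :
    (srsTau r ⁻¹' {x}).Finite := by
  -- `M_r z` lies within distance 1 of `τ_r z`, and `z ↦ M_r z` is a closed embedding of `ℤ^d`.
  have hcompact : IsCompact ((fun z => companion r *ᵥ intToReal z) ⁻¹'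
      Metric.closedBall (intToReal x) 1) :=
    ((isClosedEmbedding_companion_mulVec hd hr0).comp
      isClosedEmbedding_intToReal).isCompact_preimage (isCompact_closedBall _ _)
  refine hcompact.finite_of_discrete.subset fun z hz => ?_
  rw [Set.mem_preimage, Set.mem_singleton_iff] at hz
  simpa [dist_eq_norm, ← hz] using norm_companion_mulVec_intToReal_sub_le r z

end

section

variable {d : ℕ} {r : Fin d → ℝ} {C ρ : ℝ}

theorem norm_companion_pow_succ_mulVec_sub_le (hC : 0 ≤ C) (hρ : 0 ≤ ρ)
    (hb : ∀ (n : ℕ) (x : Fin d → ℝ), ‖(companion r ^ n) *ᵥ x‖ ≤ C * ρ ^ n * ‖x‖)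
    (n : ℕ) (z : Fin d → ℤ) :
    ‖(companion r ^ (n + 1)) *ᵥ intToReal z - (companion r ^ n) *ᵥ intToReal (srsTau r z)‖
      ≤ C * ρ ^ n :=
  calc _ = ‖(companion r ^ n) *ᵥ (companion r *ᵥ intToReal z - intToReal (srsTau r z))‖ := by
        rw [mulVec_sub, mulVec_mulVec, ← pow_succ]
    _ ≤ C * ρ ^ n * ‖companion r *ᵥ intToReal z - intToReal (srsTau r z)‖ := hb _ _
    _ ≤ C * ρ ^ n := mul_le_of_le_one_right (by positivity)
        (norm_companion_mulVec_intToReal_sub_le r z)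

theorem norm_companion_pow_mulVec_sub_iterate_le (hC : 0 ≤ C) (hρ : 0 ≤ ρ) (hρ1 : ρ < 1)
    (hb : ∀ (n : ℕ) (x : Fin d → ℝ), ‖(companion r ^ n) *ᵥ x‖ ≤ C * ρ ^ n * ‖x‖)
    (k n : ℕ) (z : Fin d → ℤ) :
    ‖(companion r ^ (k + n)) *ᵥ intToReal z - (companion r ^ k) *ᵥ intToReal ((srsTau r)^[n] z)‖
      ≤ C * (ρ ^ k / (1 - ρ)) := by
  suffices h : ∀ n z, ‖(companion r ^ (k + n)) *ᵥ intToReal z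
      - (companion r ^ k) *ᵥ intToReal ((srsTau r)^[n] z)‖
        ≤ C * ∑ i ∈ Finset.Ico k (k + n), ρ ^ i from
    (h n z).trans (mul_le_mul_of_nonneg_left (geom_sum_Ico_le_of_lt_one hρ hρ1) hC)
  intro n
  induction n with
  | zero => simp
  | succ n ih =>
    intro z
    calc _ ≤ ‖(companion r ^ (k + n + 1)) *ᵥ intToReal z
            - (companion r ^ (k + n)) *ᵥ intToReal (srsTau r z)‖
          + ‖(companion r ^ (k + n)) *ᵥ intToReal (srsTau r z)
            - (companion r ^ k) *ᵥ intToReal ((srsTau r)^[n] (srsTau r z))‖ :=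
          norm_sub_le_norm_sub_add_norm_sub _ _ _
      _ ≤ C * ρ ^ (k + n) + C * ∑ i ∈ Finset.Ico k (k + n), ρ ^ i :=
          add_le_add (norm_companion_pow_succ_mulVec_sub_le hC hρ hb _ _) (ih _)
      _ = C * ∑ i ∈ Finset.Ico k (k + (n + 1)), ρ ^ i := by
          rw [← add_assoc, Finset.sum_Ico_succ_top (Nat.le_add_right k n)]
          ring

end

section

variable {d : ℕ} {r : Fin d → ℝ}

theorem companion_mulVec_mem_srsTile {t : Fin d → ℝ} {y : Fin d → ℤ} (h : t ∈ srsTile r y) :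
    companion r *ᵥ t ∈ srsTile r (srsTau r y) := by
  obtain ⟨z, hz, hlim⟩ := h
  refine ⟨fun | 0 => srsTau r y | n + 1 => z n, fun n => ?_, ?_⟩
  · cases n with
    | zero => rfl
    | succ n => exact (Function.iterate_succ_apply' _ _ _).trans (congrArg _ (hz n))
  · rw [← tendsto_add_atTop_iff_nat 1]
    simpa only [pow_succ', ← mulVec_mulVec, Function.comp_def, id] using
      ((continuous_const.matrix_mulVec continuous_id).tendsto t).comp hlim

theorem exists_srsTau_eq_and_mem_srsTile (hd : 0 < d) (hr0 : r ⟨0, hd⟩ ≠ 0)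
    (hcontr : srsContractive r) {t : Fin d → ℝ} {x : Fin d → ℤ}
    (h : companion r *ᵥ t ∈ srsTile r x) : ∃ y, srsTau r y = x ∧ t ∈ srsTile r y := by
  obtain ⟨C, hC, ρ, hρ, hρ1, hb⟩ := hcontr
  obtain ⟨z, hz, hlim⟩ := h
  have hfiber (n : ℕ) : (srsTau r)^[n] (z (n + 1)) ∈ srsTau r ⁻¹' {x} := by
    simpa only [Set.mem_preimage, Set.mem_singleton_iff, Function.iterate_succ_apply']
      using hz (n + 1)
  -- pigeonhole in the finite fibre, then a diagonal sequence along the extracted subsequence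
  obtain ⟨y, hy, hfreq⟩ :
      ∃ y ∈ srsTau r ⁻¹' {x}, ∃ᶠ n in atTop, (srsTau r)^[n] (z (n + 1)) = y :=
    (finite_srsTau_preimage_singleton hd hr0 x).frequently_exists.mp
      (Frequently.of_forall fun n => ⟨_, hfiber n, rfl⟩)
  obtain ⟨φ, hφ, hφy⟩ := extraction_of_frequently_atTop hfreq
  have hkφ (k : ℕ) : k + (φ k - k) = φ k := Nat.add_sub_cancel' (hφ.id_le k)
  refine ⟨y, hy, fun k => (srsTau r)^[φ k - k] (z (φ k + 1)), fun k => ?_, ?_⟩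
  · rw [← Function.iterate_add_apply, hkφ, hφy]
  have hsub :
      Tendsto (fun k => (companion r ^ φ k) *ᵥ intToReal (z (φ k + 1))) atTop (𝓝 t) := by
    rw [(isClosedEmbedding_companion_mulVec hd hr0).isEmbedding.tendsto_nhds_iff]
    simpa only [Function.comp_def, mulVec_mulVec, ← pow_succ'] using
      hlim.comp ((tendsto_add_atTop_nat 1).comp hφ.tendsto_atTop)
  have hdrift : Tendsto (fun k => (companion r ^ φ k) *ᵥ intToReal (z (φ k + 1))
      - (companion r ^ k) *ᵥ intToReal ((srsTau r)^[φ k - k] (z (φ k + 1)))) atTop (𝓝 0) := by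
    refine squeeze_zero_norm (fun k => ?_) (by simpa using
      ((tendsto_pow_atTop_nhds_zero_of_lt_one hρ hρ1).div_const (1 - ρ)).const_mul C)
    simpa only [hkφ] using
      norm_companion_pow_mulVec_sub_iterate_le hC.le hρ hρ1 hb k (φ k - k) (z (φ k + 1))
  simpa using hsub.sub hdrift

theorem setOf_companion_mulVec_mem_srsTile (hd : 0 < d) (hr0 : r ⟨0, hd⟩ ≠ 0)
    (hcontr : srsContractive r) (t : Fin d → ℝ) :
    {x | companion r *ᵥ t ∈ srsTile r x} = srsTau r '' {y | t ∈ srsTile r y} := by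
  ext x
  constructor
  · intro hx
    obtain ⟨y, rfl, hy⟩ := exists_srsTau_eq_and_mem_srsTile hd hr0 hcontr hx
    exact ⟨y, hy, rfl⟩
  · rintro ⟨y, hy, rfl⟩
    exact companion_mulVec_mem_srsTile hy

end

theorem mulVec_exclusive_general (d : ℕ) (hd : 0 < d) (r : Fin d → ℝ)
    (hr0 : r ⟨0, hd⟩ ≠ 0) (hcontr : srsContractive r) (m : ℕ)
    (hmin : ∀ t : Fin d → ℝ, m ≤ {x : Fin d → ℤ | t ∈ srsTile r x}.ncard)
    (t : Fin d → ℝ) (ht : {x : Fin d → ℤ | t ∈ srsTile r x}.ncard = m) :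
    {x : Fin d → ℤ | (companion r).mulVec t ∈ srsTile r x}.ncard = m := by
  refine le_antisymm ?_ (hmin _)
  rw [setOf_companion_mulVec_mem_srsTile hd hr0 hcontr, ← ht]
  exact Set.ncard_image_le_of_finite_preimage_singleton
    (finite_srsTau_preimage_singleton hd hr0) _

/-- if t is an m-exclusive point (belongs to exactly m tiles, m the
minimal covering degree), then M_r t is also m-exclusive. -/
theorem mulVec_exclusive (d : ℕ) (hd : 0 < d) (r : Fin d → ℝ)
    (hr0 : r ⟨0, hd⟩ ≠ 0) (hcontr : srsContractive r) (m : ℕ)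
    (hmin : ∀ t : Fin d → ℝ, m ≤ {x : Fin d → ℤ | t ∈ srsTile r x}.ncard)
    (hex : ∃ t : Fin d → ℝ, {x : Fin d → ℤ | t ∈ srsTile r x}.ncard = m)
    (t : Fin d → ℝ) (ht : {x : Fin d → ℤ | t ∈ srsTile r x}.ncard = m) :
    {x : Fin d → ℤ | (companion r).mulVec t ∈ srsTile r x}.ncard = m :=
  mulVec_exclusive_general d hd r hr0 hcontr m hmin t ht
end
end
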